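/- arXiv:1809.09322 — 2 statements merged into one kernel-verified Lean document; each statement's English description precedes it below -/
import Mathlib

section
/- Assume the structural map P → (iAi)^×, u ↦ ui, is injective. Then the map Θ : N_G(P_γ) → N_{hU(iAi)}(Pi)/C_{(iBi)^×}(Pi), defined by Θ(g) := class of i a₁⁻¹ g, where a₁ ∈ (B^P)^× is any element with {}^g i = {}^{a₁} i (such a₁ exists since g fixes γ, and here g denotes the image of g under the structural map G → A^×), is a well-defined group homomorphism with kernel C_H(P). -/
universe u

/-- The set of `Ḡ`-automorphisms of `P`. -/
def autBarSet (G : Type u) [Group G] (H : Subgroup G) [H.Normal] (P : Subgroup G) :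
    Set (MulAut ↥P × (G ⧸ H)) :=
  {x | ∃ g : G, (g : G ⧸ H) = x.2 ∧
      ∀ u : ↥P, ((x.1 u : G) : G ⧸ H) = ((g * u * g⁻¹ : G) : G ⧸ H)}

/-- The set of interior `Ḡ`-automorphisms of `P`. -/
def intBarSet (G : Type u) [Group G] (H : Subgroup G) [H.Normal] (P : Subgroup G) :
    Set (MulAut ↥P × (G ⧸ H)) :=
  {x ∈ autBarSet G H P | ∃ v : ↥P, x.1 = MulAut.conj v}

section

variable {𝒪 : Type u} [CommRing 𝒪] {G : Type u} [Group G] {H : Subgroup G} [H.Normal]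
  {A : Type u} [Ring A] [Algebra 𝒪 A]

/-- `B^P`: the `P`-fixed points (under conjugation via `ρ`) of the identity component
`B = 𝒜 1` of `A`. -/
def fixedPart (𝒜 : G ⧸ H → Submodule 𝒪 A) (ρ : G →* Aˣ) (P : Subgroup G) : Set A :=
  {a | a ∈ 𝒜 (1 : G ⧸ H) ∧ ∀ u ∈ P, (ρ u : A) * a = a * (ρ u : A)}

/-- `i` is a primitive idempotent of (the subalgebra with underlying set) `S ⊆ A`. -/
def IsPrimitiveIdempotentIn (S : Set A) (i : A) : Prop :=
  i ∈ S ∧ i * i = i ∧ i ≠ 0 ∧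
    ∀ j ∈ S, j * j = j → i * j = j → j * i = j → j = 0 ∨ j = i

/-- `γ` is a point on (the subalgebra with underlying set) `S ⊆ A`: the conjugacy class
under the units of `S` of a primitive idempotent of `S`. -/
def IsPointOn (S : Set A) (γ : Set A) : Prop :=
  ∃ i, IsPrimitiveIdempotentIn S i ∧
    γ = {a | ∃ u v : A, u ∈ S ∧ v ∈ S ∧ u * v = 1 ∧ v * u = 1 ∧ a = u * i * v}

/-- `f` realizes an isomorphism `Ai ≅ (Ai)(ḡ⁻¹)_φ` of `Ḡ`-graded `(A, 𝒪P)`-bimodules,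
where `Ai = {x : A | x·i = x}`: `f` is `𝒪`-linear, maps `Ai` bijectively onto `Ai`,
is left `A`-linear on `Ai`, shifts the grading by `ḡ⁻¹` and intertwines the right
`P`-action with its `φ`-twist. -/
def IsFusionMap (𝒜 : G ⧸ H → Submodule 𝒪 A) (ρ : G →* Aˣ) (P : Subgroup G) (i : A)
    (φ : MulAut ↥P) (gb : G ⧸ H) (f : A →ₗ[𝒪] A) : Prop :=
  (∀ x : A, x * i = x → f x * i = f x) ∧
  (∀ a x : A, x * i = x → f (a * x) = a * f x) ∧
  (∀ (xb : G ⧸ H) (x : A), x ∈ 𝒜 xb → x * i = x → f x ∈ 𝒜 (xb * gb⁻¹)) ∧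
  (∀ u : ↥P, ∀ x : A, x * i = x → f (x * (ρ (u : G) : A)) = f x * (ρ ((φ u : ↥P) : G) : A)) ∧
  (∀ x y : A, x * i = x → y * i = y → f x = f y → x = y) ∧
  (∀ y : A, y * i = y → ∃ x, x * i = x ∧ f x = y)

/-- The set of `(A, Ḡ)`-fusions of `P_γ` (for `i ∈ γ`): pairs `(φ, ḡ) ∈ Aut^Ḡ(P)` with
`Ai ≅ (Ai)(ḡ⁻¹)_φ` as `Ḡ`-graded `(A, 𝒪P)`-bimodules. -/
def fusionSetC (𝒜 : G ⧸ H → Submodule 𝒪 A) (ρ : G →* Aˣ) (P : Subgroup G) (i : A) :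
    Set (MulAut ↥P × (G ⧸ H)) :=
  {x ∈ autBarSet G H P | ∃ f : A →ₗ[𝒪] A, IsFusionMap 𝒜 ρ P i x.1 x.2 f}

/-- The set of homogeneous units of the corner algebra `iAi` (whose identity is `i`). -/
def hUCornerSet (𝒜 : G ⧸ H → Submodule 𝒪 A) (i : A) : Set A :=
  {a | i * a * i = a ∧ (∃ gb : G ⧸ H, a ∈ 𝒜 gb) ∧
    ∃ a', i * a' * i = a' ∧ a * a' = i ∧ a' * a = i}

/-- The normalizer `N_{hU(iAi)}(Pi)` of `Pi = {ui : u ∈ P}` in the group of homogeneous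
units of `iAi`. -/
def normalizerPiSet (𝒜 : G ⧸ H → Submodule 𝒪 A) (ρ : G →* Aˣ) (P : Subgroup G)
    (i : A) : Set A :=
  {a ∈ hUCornerSet 𝒜 i | ∀ a' : A, i * a' * i = a' → a * a' = i → a' * a = i →
      ∀ u ∈ P, ∃ v ∈ P, a * ((ρ u : A) * i) * a' = (ρ v : A) * i}

/-- The centralizer `C_{(iBi)ˣ}(Pi)` of `Pi` in the unit group of `iBi`
(`B = 𝒜 1` being the identity component of `A`). -/
def centralizerPiSet (𝒜 : G ⧸ H → Submodule 𝒪 A) (ρ : G →* Aˣ) (P : Subgroup G)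
    (i : A) : Set A :=
  {a | i * a * i = a ∧ a ∈ 𝒜 (1 : G ⧸ H) ∧
    (∃ a', i * a' * i = a' ∧ a' ∈ 𝒜 (1 : G ⧸ H) ∧ a * a' = i ∧ a' * a = i) ∧
    ∀ u ∈ P, a * ((ρ u : A) * i) = ((ρ u : A) * i) * a}

end

section

variable {𝒪 : Type u} [CommRing 𝒪] {G : Type u} [Group G] {H : Subgroup G} [H.Normal]
  {A : Type u} [Ring A] [Algebra 𝒪 A]

/-- `N_G(P_γ) = {g ∈ N_G(P) : {}^g γ = γ}`, conjugation taken through `ρ`. -/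
def stabNGammaSet (ρ : G →* Aˣ) (P : Subgroup G) (γ : Set A) : Set G :=
  {g | g ∈ Subgroup.normalizer (P : Set G) ∧ ∀ a : A, a ∈ γ ↔ (ρ g : A) * a * (ρ g⁻¹ : A) ∈ γ}

/-- `(a₁, b₁)` is a pair of mutually inverse units of `B^P` with `{}^g i = {}^{a₁} i`. -/
def IsConjChoice (𝒜 : G ⧸ H → Submodule 𝒪 A) (ρ : G →* Aˣ) (P : Subgroup G)
    (i : A) (g : G) (a₁ b₁ : A) : Prop :=
  a₁ ∈ fixedPart 𝒜 ρ P ∧ b₁ ∈ fixedPart 𝒜 ρ P ∧ a₁ * b₁ = 1 ∧ b₁ * a₁ = 1 ∧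
    (ρ g : A) * i * (ρ g⁻¹ : A) = a₁ * i * b₁

end

/-!
Choose `a₁ ∈ (B^P)ˣ` with `{}^g i = {}^{a₁} i`. Then `s = a₁⁻¹ g` commutes with `i`, so `i s = s i`
is a homogeneous unit of degree `ḡ` of the corner algebra `iAi`, with inverse `s⁻¹ i`, and
conjugation by it acts on `Pi` as `g` acts on `P`. Homogeneous units of the same degree which act
on `Pi` in the same way differ by an element of `C_{(iBi)ˣ}(Pi)`; this gives both the independence
of the choice of `a₁` and multiplicativity. Finally `i s ≠ 0` lies in `B = A₁` only if `ḡ = 1`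
(the grading is a direct sum), and it centralizes `Pi` exactly when `g` centralizes `P`, by the
injectivity of `u ↦ ui`.
-/

theorem iSupIndep.eq_of_mem_of_mem_of_ne_zero {ι R M : Type*} [Semiring R] [AddCommMonoid M]
    [Module R M] {p : ι → Submodule R M} (hp : iSupIndep p) {d e : ι} {x : M}
    (hd : x ∈ p d) (he : x ∈ p e) (hx : x ≠ 0) : d = e := by
  by_contra hde
  exact hx (Submodule.disjoint_def.mp (hp.pairwiseDisjoint hde) x hd he)

namespace IsPointOn

variable {A : Type u} [Ring A] {S γ : Set A}

theorem exists_conj (hγ : IsPointOn S γ) (hS : ∀ a ∈ S, ∀ b ∈ S, a * b ∈ S) {i k : A}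
    (hi : i ∈ γ) (hk : k ∈ γ) :
    ∃ a b : A, a ∈ S ∧ b ∈ S ∧ a * b = 1 ∧ b * a = 1 ∧ k = a * i * b := by
  obtain ⟨i₀, -, rfl⟩ := hγ
  obtain ⟨u, v, hu, hv, huv, hvu, rfl⟩ := hi
  obtain ⟨u', v', hu', hv', huv', hvu', rfl⟩ := hk
  refine ⟨u' * v, u * v', hS _ hu' _ hv, hS _ hu _ hv', ?_, ?_, ?_⟩
  · calc u' * v * (u * v') = u' * (v * u) * v' := by noncomm_ring
      _ = 1 := by rw [hvu, mul_one, huv']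
  · calc u * v' * (u' * v) = u * (v' * u') * v := by noncomm_ring
      _ = 1 := by rw [hvu', mul_one, huv]
  · calc u' * i₀ * v' = u' * (v * u) * i₀ * (v * u) * v' := by rw [hvu, mul_one, mul_one]
      _ = u' * v * (u * i₀ * v) * (u * v') := by noncomm_ring

theorem subset (hγ : IsPointOn S γ) (hS : ∀ a ∈ S, ∀ b ∈ S, a * b ∈ S) : γ ⊆ S := by
  obtain ⟨i₀, hi₀, rfl⟩ := hγ
  rintro - ⟨u, v, hu, hv, -, -, rfl⟩
  exact hS _ (hS _ hu _ hi₀.1) _ hv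

theorem isIdempotentElem_of_mem (hγ : IsPointOn S γ) {i : A} (hi : i ∈ γ) :
    IsIdempotentElem i := by
  obtain ⟨i₀, hi₀, rfl⟩ := hγ
  obtain ⟨u, v, -, -, -, hvu, rfl⟩ := hi
  calc u * i₀ * v * (u * i₀ * v) = u * (i₀ * (v * u) * i₀) * v := by noncomm_ring
    _ = u * i₀ * v := by rw [hvu, mul_one, hi₀.2.1]

theorem ne_zero_of_mem (hγ : IsPointOn S γ) {i : A} (hi : i ∈ γ) : i ≠ 0 := by
  obtain ⟨i₀, hi₀, rfl⟩ := hγ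
  obtain ⟨u, v, -, -, -, hvu, rfl⟩ := hi
  intro h
  apply hi₀.2.2.1
  calc i₀ = v * u * i₀ * (v * u) := by rw [hvu, one_mul, mul_one]
    _ = v * (u * i₀ * v) * u := by noncomm_ring
    _ = 0 := by rw [h, mul_zero, zero_mul]

end IsPointOn

section CornerUnit

variable {𝒪 : Type u} [CommRing 𝒪] {G : Type u} [Group G] {H : Subgroup G} [H.Normal]
  {A : Type u} [Ring A] [Algebra 𝒪 A] {𝒜 : G ⧸ H → Submodule 𝒪 A} {ρ : G →* Aˣ}
  {P : Subgroup G} {i : A}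

theorem fixedPart_mul_mem
    (hgmul : ∀ {x y : G ⧸ H} {a b : A}, a ∈ 𝒜 x → b ∈ 𝒜 y → a * b ∈ 𝒜 (x * y))
    {a b : A} (ha : a ∈ fixedPart 𝒜 ρ P) (hb : b ∈ fixedPart 𝒜 ρ P) :
    a * b ∈ fixedPart 𝒜 ρ P := by
  refine ⟨by simpa using hgmul ha.1 hb.1, fun u hu => ?_⟩
  rw [← mul_assoc, ha.2 u hu, mul_assoc, hb.2 u hu, ← mul_assoc]

variable (𝒜 i) in
structure IsHomCornerUnit (d : G ⧸ H) (x x' : A) : Prop where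
  left_id : i * x = x
  right_id : x * i = x
  inv_left_id : i * x' = x'
  inv_right_id : x' * i = x'
  mul_inv : x * x' = i
  inv_mul : x' * x = i
  mem_grade : x ∈ 𝒜 d
  inv_mem_grade : x' ∈ 𝒜 d⁻¹

variable (ρ P i) in
def ConjugatesPi (x : A) (g : G) : Prop :=
  ∀ u ∈ P, x * ((ρ u : A) * i) = (ρ (g * u * g⁻¹) : A) * i * x

namespace IsHomCornerUnit

variable {d e : G ⧸ H} {x x' y y' : A}

theorem isIdempotentElem (hx : IsHomCornerUnit 𝒜 i d x x') : IsIdempotentElem i := by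
  calc i * i = x * (x' * x) * x' := by rw [← hx.mul_inv]; noncomm_ring
    _ = i := by rw [hx.inv_mul, hx.right_id, hx.mul_inv]

theorem symm (hx : IsHomCornerUnit 𝒜 i d x x') : IsHomCornerUnit 𝒜 i d⁻¹ x' x :=
  ⟨hx.inv_left_id, hx.inv_right_id, hx.left_id, hx.right_id, hx.inv_mul, hx.mul_inv,
    hx.inv_mem_grade, (inv_inv d).symm ▸ hx.mem_grade⟩

theorem mul (hgmul : ∀ {x y : G ⧸ H} {a b : A}, a ∈ 𝒜 x → b ∈ 𝒜 y → a * b ∈ 𝒜 (x * y))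
    (hx : IsHomCornerUnit 𝒜 i d x x') (hy : IsHomCornerUnit 𝒜 i e y y') :
    IsHomCornerUnit 𝒜 i (d * e) (x * y) (y' * x') where
  left_id := by rw [← mul_assoc, hx.left_id]
  right_id := by rw [mul_assoc, hy.right_id]
  inv_left_id := by rw [← mul_assoc, hy.inv_left_id]
  inv_right_id := by rw [mul_assoc, hx.inv_right_id]
  mul_inv := by rw [mul_assoc, ← mul_assoc y, hy.mul_inv, hx.inv_left_id, hx.mul_inv]
  inv_mul := by rw [mul_assoc, ← mul_assoc x', hx.inv_mul, hy.left_id, hy.inv_mul]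
  mem_grade := hgmul hx.mem_grade hy.mem_grade
  inv_mem_grade := mul_inv_rev d e ▸ hgmul hy.inv_mem_grade hx.inv_mem_grade

theorem eq_inv_of_mul_eq (hx : IsHomCornerUnit 𝒜 i d x x') {a : A} (ha : i * a * i = a)
    (hax : a * x = i) : a = x' := by
  have hai : a * i = a := by rw [← ha, mul_assoc, hx.isIdempotentElem.eq]
  calc a = a * x * x' := by rw [mul_assoc, hx.mul_inv, hai]
    _ = x' := by rw [hax, hx.inv_left_id]

theorem mul_right_cancel (hx : IsHomCornerUnit 𝒜 i d x x') {s t : A} (hs : s * i = s)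
    (ht : t * i = t) (h : s * x = t * x) : s = t := by
  rw [← hs, ← ht, ← hx.mul_inv, ← mul_assoc, h, mul_assoc]

end IsHomCornerUnit

variable {d : G ⧸ H} {x x' y y' : A} {g h : G}

theorem ConjugatesPi.mul (hh : h ∈ Subgroup.normalizer (P : Set G))
    (hxg : ConjugatesPi ρ P i x g) (hyh : ConjugatesPi ρ P i y h) :
    ConjugatesPi ρ P i (x * y) (g * h) := by
  intro u hu
  have hconj : g * (h * u * h⁻¹) * g⁻¹ = g * h * u * (g * h)⁻¹ := by group
  rw [mul_assoc, hyh u hu, ← mul_assoc, hxg _ ((hh u).mp hu), hconj, mul_assoc]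

theorem ConjugatesPi.inv (hi : i ∈ fixedPart 𝒜 ρ P) (hg : g ∈ Subgroup.normalizer (P : Set G))
    (hx : IsHomCornerUnit 𝒜 i d x x') (hxg : ConjugatesPi ρ P i x g) :
    ConjugatesPi ρ P i x' g⁻¹ := by
  intro u hu
  have hwP : g⁻¹ * u * g ∈ P := (Subgroup.mem_set_normalizer_iff''.mp hg u).mp hu
  have hconj : g * (g⁻¹ * u * g) * g⁻¹ = u := by group
  have hii := hx.isIdempotentElem.eq
  rw [inv_inv]
  have hxw := hxg _ hwP
  rw [hconj] at hxw
  refine hx.mul_right_cancel (by simp only [mul_assoc, hii])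
    (by simp only [mul_assoc, hx.inv_right_id]) ?_
  calc x' * ((ρ u : A) * i) * x = x' * x * ((ρ (g⁻¹ * u * g) : A) * i) := by
        rw [mul_assoc, ← hxw, ← mul_assoc]
    _ = (ρ (g⁻¹ * u * g) : A) * i * x' * x := by
        rw [hx.inv_mul, mul_assoc _ x', hx.inv_mul, ← mul_assoc, ← hi.2 _ hwP]

theorem IsHomCornerUnit.mem_normalizerPiSet (hx : IsHomCornerUnit 𝒜 i d x x')
    (hxg : ConjugatesPi ρ P i x g) (hg : g ∈ Subgroup.normalizer (P : Set G)) :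
    x ∈ normalizerPiSet 𝒜 ρ P i := by
  refine ⟨⟨by rw [hx.left_id, hx.right_id], ⟨d, hx.mem_grade⟩, x',
    by rw [hx.inv_left_id, hx.inv_right_id], hx.mul_inv, hx.inv_mul⟩, ?_⟩
  rintro a' ha' - ha'x u hu
  obtain rfl := hx.eq_inv_of_mul_eq ha' ha'x
  refine ⟨g * u * g⁻¹, (hg u).mp hu, ?_⟩
  rw [hxg u hu, mul_assoc, hx.mul_inv, mul_assoc, hx.isIdempotentElem.eq]

theorem IsHomCornerUnit.mem_centralizerPiSet (hx : IsHomCornerUnit 𝒜 i 1 x x')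
    (hxP : ∀ u ∈ P, x * ((ρ u : A) * i) = (ρ u : A) * i * x) :
    x ∈ centralizerPiSet 𝒜 ρ P i :=
  ⟨by rw [hx.left_id, hx.right_id], hx.mem_grade,
    ⟨x', by rw [hx.inv_left_id, hx.inv_right_id], inv_one (G := G ⧸ H) ▸ hx.inv_mem_grade,
      hx.mul_inv, hx.inv_mul⟩, hxP⟩

theorem IsHomCornerUnit.exists_mem_centralizerPiSet_mul_eq
    (hgmul : ∀ {x y : G ⧸ H} {a b : A}, a ∈ 𝒜 x → b ∈ 𝒜 y → a * b ∈ 𝒜 (x * y))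
    (hi : i ∈ fixedPart 𝒜 ρ P) (hg : g ∈ Subgroup.normalizer (P : Set G))
    (hx : IsHomCornerUnit 𝒜 i d x x') (hxg : ConjugatesPi ρ P i x g)
    (hy : IsHomCornerUnit 𝒜 i d y y') (hyg : ConjugatesPi ρ P i y g) :
    ∃ c ∈ centralizerPiSet 𝒜 ρ P i, x = c * y := by
  have hc := mul_inv_cancel d ▸ hx.mul hgmul hy.symm
  have hcg := hxg.mul (inv_mem hg) (hyg.inv hi hg hy)
  refine ⟨x * y', hc.mem_centralizerPiSet fun u hu => by simpa using hcg u hu, ?_⟩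
  rw [mul_assoc, hy.inv_mul, hx.right_id]

theorem IsHomCornerUnit.mem_centralizerPiSet_iff (hind : iSupIndep 𝒜)
    (hinj : ∀ u v : ↥P, (ρ (u : G) : A) * i = (ρ (v : G) : A) * i → u = v) (hi0 : i ≠ 0)
    (hx : IsHomCornerUnit 𝒜 i g x x') (hxg : ConjugatesPi ρ P i x g)
    (hg : g ∈ Subgroup.normalizer (P : Set G)) :
    x ∈ centralizerPiSet 𝒜 ρ P i ↔ g ∈ Subgroup.centralizer (P : Set G) ⊓ H := by
  have hii := hx.isIdempotentElem.eq
  constructor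
  · intro hc
    have hx0 : x ≠ 0 := fun h => hi0 (by rw [← hx.mul_inv, h, zero_mul])
    have hgH : g ∈ H := (QuotientGroup.eq_one_iff g).mp
      (hind.eq_of_mem_of_mem_of_ne_zero hx.mem_grade hc.2.1 hx0)
    refine ⟨Subgroup.mem_centralizer_iff.mpr fun u hu => ?_, hgH⟩
    have hui : (ρ (g * u * g⁻¹) : A) * i = (ρ u : A) * i :=
      hx.mul_right_cancel (by rw [mul_assoc, hii]) (by rw [mul_assoc, hii])
        ((hxg u hu).symm.trans (hc.2.2.2 u hu))
    have hgu : g * u * g⁻¹ = u := congrArg Subtype.val (hinj ⟨_, (hg u).mp hu⟩ ⟨u, hu⟩ hui)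
    exact (mul_inv_eq_iff_eq_mul.mp hgu).symm
  · rintro ⟨hcent, hgH⟩
    have hg1 : (g : G ⧸ H) = 1 := (QuotientGroup.eq_one_iff g).mpr hgH
    refine (hg1 ▸ hx).mem_centralizerPiSet fun u hu => ?_
    rw [hxg u hu, mul_inv_eq_of_eq_mul (Subgroup.mem_centralizer_iff.mp hcent u hu).symm]

theorem isHomCornerUnit_of_commute
    (hgmul : ∀ {x y : G ⧸ H} {a b : A}, a ∈ 𝒜 x → b ∈ 𝒜 y → a * b ∈ 𝒜 (x * y))
    (hii : IsIdempotentElem i) (hi : i ∈ 𝒜 1) {s s' : A} (hs : s ∈ 𝒜 d) (hs' : s' ∈ 𝒜 d⁻¹)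
    (hss' : s * s' = 1) (hs's : s' * s = 1) (hsi : Commute s i) :
    IsHomCornerUnit 𝒜 i d (i * s) (s' * i) := by
  have hs'i : Commute s' i := by
    calc s' * i = s' * (s * i) * s' := by rw [hsi.eq, mul_assoc s', mul_assoc i, hss', mul_one]
      _ = i * s' := by rw [← mul_assoc, hs's, one_mul]
  exact
    { left_id := by rw [← mul_assoc, hii.eq]
      right_id := by rw [mul_assoc, hsi.eq, ← mul_assoc, hii.eq]
      inv_left_id := by rw [← mul_assoc, ← hs'i.eq, mul_assoc, hii.eq]
      inv_right_id := by rw [mul_assoc, hii.eq]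
      mul_inv := by rw [mul_assoc, ← mul_assoc s, hss', one_mul, hii.eq]
      inv_mul := by rw [mul_assoc, ← mul_assoc i, hii.eq, ← hsi.eq, ← mul_assoc, hs's, one_mul]
      mem_grade := one_mul d ▸ hgmul hi hs
      inv_mem_grade := mul_one d⁻¹ ▸ hgmul hs' hi }

theorem conjugatesPi_of_commute (hi : i ∈ fixedPart 𝒜 ρ P) {s : A}
    (hsi : Commute s i) (hsP : ∀ u ∈ P, s * (ρ u : A) = (ρ (g * u * g⁻¹) : A) * s)
    (hg : g ∈ Subgroup.normalizer (P : Set G)) : ConjugatesPi ρ P i (i * s) g := by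
  intro u hu
  calc i * s * ((ρ u : A) * i) = i * (ρ (g * u * g⁻¹) : A) * (s * i) := by
        rw [mul_assoc i s, ← mul_assoc s, hsP u hu]; noncomm_ring
    _ = (ρ (g * u * g⁻¹) : A) * i * (i * s) := by rw [← hi.2 _ ((hg u).mp hu), hsi.eq]

namespace IsConjChoice

variable {a₁ b₁ : A}

theorem commute (hc : IsConjChoice 𝒜 ρ P i g a₁ b₁) : Commute (b₁ * (ρ g : A)) i := by
  calc b₁ * (ρ g : A) * i = b₁ * ((ρ g : A) * i * (ρ g⁻¹ : A)) * (ρ g : A) := by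
        simp [mul_assoc]
    _ = b₁ * a₁ * i * (b₁ * (ρ g : A)) := by rw [hc.2.2.2.2]; noncomm_ring
    _ = i * (b₁ * (ρ g : A)) := by rw [hc.2.2.2.1, one_mul]

theorem isHomCornerUnit
    (hgmul : ∀ {x y : G ⧸ H} {a b : A}, a ∈ 𝒜 x → b ∈ 𝒜 y → a * b ∈ 𝒜 (x * y))
    (hρ : ∀ g : G, (ρ g : A) ∈ 𝒜 (g : G ⧸ H)) (hi : i ∈ fixedPart 𝒜 ρ P)
    (hii : IsIdempotentElem i) (hc : IsConjChoice 𝒜 ρ P i g a₁ b₁) :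
    IsHomCornerUnit 𝒜 i g (i * b₁ * (ρ g : A)) ((ρ g⁻¹ : A) * a₁ * i) := by
  rw [mul_assoc i]
  exact isHomCornerUnit_of_commute hgmul hii hi.1 (by simpa using hgmul hc.2.1.1 (hρ g))
    (by simpa using hgmul (hρ g⁻¹) hc.1.1) (by simp [mul_assoc, hc.2.2.2.1])
    (by rw [mul_assoc, ← mul_assoc a₁, hc.2.2.1, one_mul, ← Units.val_mul, ← map_mul,
      inv_mul_cancel, map_one, Units.val_one]) hc.commute

theorem conjugatesPi (hi : i ∈ fixedPart 𝒜 ρ P) (hg : g ∈ Subgroup.normalizer (P : Set G))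
    (hc : IsConjChoice 𝒜 ρ P i g a₁ b₁) :
    ConjugatesPi ρ P i (i * b₁ * (ρ g : A)) g := by
  rw [mul_assoc i]
  refine conjugatesPi_of_commute hi hc.commute (fun u hu => ?_) hg
  have hgu : (ρ g : A) * ρ u = (ρ (g * u * g⁻¹) : A) * ρ g := by
    rw [← Units.val_mul, ← map_mul, ← Units.val_mul, ← map_mul, inv_mul_cancel_right]
  rw [mul_assoc, hgu, ← mul_assoc, ← hc.2.1.2 _ ((hg u).mp hu), mul_assoc]

end IsConjChoice

end CornerUnit

theorem theta_well_defined_hom_kernel_general {𝒪 : Type u} [CommRing 𝒪] {G : Type u} [Group G]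
    {H : Subgroup G} [H.Normal] {A : Type u} [Ring A] [Algebra 𝒪 A]
    (𝒜 : G ⧸ H → Submodule 𝒪 A) (ρ : G →* Aˣ) (P : Subgroup G)
    -- `𝒜`, `ρ` make `A` a `Ḡ`-graded `G`-interior algebra:
    (hgmul : ∀ {x y : G ⧸ H} {a b : A}, a ∈ 𝒜 x → b ∈ 𝒜 y → a * b ∈ 𝒜 (x * y))
    (hind : iSupIndep 𝒜)
    (hρ : ∀ g : G, (ρ g : A) ∈ 𝒜 (g : G ⧸ H))
    -- `γ` is a point of `P` on `B` and `i ∈ γ`: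
    (γ : Set A) (hγ : IsPointOn (fixedPart 𝒜 ρ P) γ) (i : A) (hi : i ∈ γ)
    -- the structural map `P → (iAi)ˣ`, `u ↦ ui`, is injective:
    (hinj : ∀ u v : ↥P, (ρ (u : G) : A) * i = (ρ (v : G) : A) * i → u = v) :
    -- existence of the element `a₁` for every `g ∈ N_G(P_γ)` (since `g` fixes `γ`)
    (∀ g ∈ stabNGammaSet ρ P γ, ∃ a₁ b₁ : A, IsConjChoice 𝒜 ρ P i g a₁ b₁) ∧
    -- `Θ(g) = [i·a₁⁻¹·ρ(g)]` is a well-defined element of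
    -- `N_{hU(iAi)}(Pi)/C_{(iBi)ˣ}(Pi)`: the representative lies in `N_{hU(iAi)}(Pi)`,
    (∀ g ∈ stabNGammaSet ρ P γ, ∀ a₁ b₁ : A, IsConjChoice 𝒜 ρ P i g a₁ b₁ →
      i * b₁ * (ρ g : A) ∈ normalizerPiSet 𝒜 ρ P i) ∧
    -- and its class mod `C_{(iBi)ˣ}(Pi)` does not depend on the choice of `a₁`;
    (∀ g ∈ stabNGammaSet ρ P γ, ∀ a₁ b₁ a₂ b₂ : A, IsConjChoice 𝒜 ρ P i g a₁ b₁ →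
      IsConjChoice 𝒜 ρ P i g a₂ b₂ →
      ∃ c ∈ centralizerPiSet 𝒜 ρ P i, i * b₁ * (ρ g : A) = c * (i * b₂ * (ρ g : A))) ∧
    -- `Θ` is a group homomorphism (multiplicative modulo `C_{(iBi)ˣ}(Pi)`);
    (∀ g ∈ stabNGammaSet ρ P γ, ∀ g' ∈ stabNGammaSet ρ P γ,
      ∀ a₁ b₁ a₁' b₁' a₁'' b₁'' : A, IsConjChoice 𝒜 ρ P i g a₁ b₁ →
      IsConjChoice 𝒜 ρ P i g' a₁' b₁' → IsConjChoice 𝒜 ρ P i (g * g') a₁'' b₁'' →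
      ∃ c ∈ centralizerPiSet 𝒜 ρ P i,
        (i * b₁ * (ρ g : A)) * (i * b₁' * (ρ g' : A)) =
          c * (i * b₁'' * (ρ (g * g') : A))) ∧
    -- the kernel of `Θ` is `C_H(P)`
    (∀ g ∈ stabNGammaSet ρ P γ, ∀ a₁ b₁ : A, IsConjChoice 𝒜 ρ P i g a₁ b₁ →
      (i * b₁ * (ρ g : A) ∈ centralizerPiSet 𝒜 ρ P i ↔
        g ∈ Subgroup.centralizer (P : Set G) ⊓ H)) := by
  have hmul : ∀ a ∈ fixedPart 𝒜 ρ P, ∀ b ∈ fixedPart 𝒜 ρ P, a * b ∈ fixedPart 𝒜 ρ P :=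
    fun _ ha _ hb => fixedPart_mul_mem hgmul ha hb
  have hiS := hγ.subset hmul hi
  have unit {g : G} {a₁ b₁ : A} (hc : IsConjChoice 𝒜 ρ P i g a₁ b₁) :=
    hc.isHomCornerUnit hgmul hρ hiS (hγ.isIdempotentElem_of_mem hi)
  have conj {g : G} {a₁ b₁ : A} (hg : g ∈ Subgroup.normalizer (P : Set G))
      (hc : IsConjChoice 𝒜 ρ P i g a₁ b₁) := hc.conjugatesPi hiS hg
  refine ⟨fun g hg => hγ.exists_conj hmul hi ((hg.2 i).mp hi), ?_, ?_, ?_, ?_⟩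
  · intro g hg a₁ b₁ hc
    exact (unit hc).mem_normalizerPiSet (conj hg.1 hc) hg.1
  · intro g hg a₁ b₁ a₂ b₂ hc₁ hc₂
    exact (unit hc₁).exists_mem_centralizerPiSet_mul_eq hgmul hiS hg.1 (conj hg.1 hc₁) (unit hc₂)
      (conj hg.1 hc₂)
  · intro g hg g' hg' a₁ b₁ a₁' b₁' a₁'' b₁'' hc hc' hc''
    have hgg' := mul_mem hg.1 hg'.1
    -- the degrees `↑g * ↑g'` and `↑(g * g')` agree by `rfl`
    exact ((unit hc).mul hgmul (unit hc')).exists_mem_centralizerPiSet_mul_eq hgmul hiS hgg'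
      ((conj hg.1 hc).mul hg'.1 (conj hg'.1 hc')) (unit hc'') (conj hgg' hc'')
  · intro g hg a₁ b₁ hc
    exact (unit hc).mem_centralizerPiSet_iff hind hinj (hγ.ne_zero_of_mem hi) (conj hg.1 hc) hg.1

theorem theta_well_defined_hom_kernel {𝒪 : Type u} [CommRing 𝒪] {G : Type u} [Group G]
    [Finite G] {H : Subgroup G} [H.Normal] {A : Type u} [Ring A] [Algebra 𝒪 A]
    (𝒜 : G ⧸ H → Submodule 𝒪 A) (ρ : G →* Aˣ) (P : Subgroup G)
    -- `𝒜`, `ρ` make `A` a `Ḡ`-graded `G`-interior algebra: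
    (hone : (1 : A) ∈ 𝒜 1)
    (hgmul : ∀ {x y : G ⧸ H} {a b : A}, a ∈ 𝒜 x → b ∈ 𝒜 y → a * b ∈ 𝒜 (x * y))
    (hsup : (⨆ x, 𝒜 x) = ⊤) (hind : iSupIndep 𝒜)
    (hρ : ∀ g : G, (ρ g : A) ∈ 𝒜 (g : G ⧸ H))
    -- `γ` is a point of `P` on `B` and `i ∈ γ`:
    (γ : Set A) (hγ : IsPointOn (fixedPart 𝒜 ρ P) γ) (i : A) (hi : i ∈ γ)
    -- the structural map `P → (iAi)ˣ`, `u ↦ ui`, is injective: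
    (hinj : ∀ u v : ↥P, (ρ (u : G) : A) * i = (ρ (v : G) : A) * i → u = v) :
    -- existence of the element `a₁` for every `g ∈ N_G(P_γ)` (since `g` fixes `γ`)
    (∀ g ∈ stabNGammaSet ρ P γ, ∃ a₁ b₁ : A, IsConjChoice 𝒜 ρ P i g a₁ b₁) ∧
    -- `Θ(g) = [i·a₁⁻¹·ρ(g)]` is a well-defined element of
    -- `N_{hU(iAi)}(Pi)/C_{(iBi)ˣ}(Pi)`: the representative lies in `N_{hU(iAi)}(Pi)`,
    (∀ g ∈ stabNGammaSet ρ P γ, ∀ a₁ b₁ : A, IsConjChoice 𝒜 ρ P i g a₁ b₁ →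
      i * b₁ * (ρ g : A) ∈ normalizerPiSet 𝒜 ρ P i) ∧
    -- and its class mod `C_{(iBi)ˣ}(Pi)` does not depend on the choice of `a₁`;
    (∀ g ∈ stabNGammaSet ρ P γ, ∀ a₁ b₁ a₂ b₂ : A, IsConjChoice 𝒜 ρ P i g a₁ b₁ →
      IsConjChoice 𝒜 ρ P i g a₂ b₂ →
      ∃ c ∈ centralizerPiSet 𝒜 ρ P i, i * b₁ * (ρ g : A) = c * (i * b₂ * (ρ g : A))) ∧
    -- `Θ` is a group homomorphism (multiplicative modulo `C_{(iBi)ˣ}(Pi)`);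
    (∀ g ∈ stabNGammaSet ρ P γ, ∀ g' ∈ stabNGammaSet ρ P γ,
      ∀ a₁ b₁ a₁' b₁' a₁'' b₁'' : A, IsConjChoice 𝒜 ρ P i g a₁ b₁ →
      IsConjChoice 𝒜 ρ P i g' a₁' b₁' → IsConjChoice 𝒜 ρ P i (g * g') a₁'' b₁'' →
      ∃ c ∈ centralizerPiSet 𝒜 ρ P i,
        (i * b₁ * (ρ g : A)) * (i * b₁' * (ρ g' : A)) =
          c * (i * b₁'' * (ρ (g * g') : A))) ∧
    -- the kernel of `Θ` is `C_H(P)`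
    (∀ g ∈ stabNGammaSet ρ P γ, ∀ a₁ b₁ : A, IsConjChoice 𝒜 ρ P i g a₁ b₁ →
      (i * b₁ * (ρ g : A) ∈ centralizerPiSet 𝒜 ρ P i ↔
        g ∈ Subgroup.centralizer (P : Set G) ⊓ H)) :=
  theta_well_defined_hom_kernel_general 𝒜 ρ P hgmul hind hρ γ hγ i hi hinj
end

section
/- Let A be a crossed product of B := A₁ with Ḡ, V a B-module, M := A⊗_B V, and A' := End_A(M)^op graded by A'_g := Hom_{A-Gr}(M, M(g)). Then for all g, x ∈ Ḡ there are natural isomorphisms A'_g ≅ Hom_{A₁}(M₁, M_g) ≅ Hom_{A₁}(M_x, M_{xg}), and A' is a crossed product of A'₁ with Ḡ if and only if V is a Ḡ-invariant B-module. -/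
/-!
Every component `A_g` contains a unit `u` whose inverse lies in `A_{g⁻¹}`, so multiplication
by homogeneous units identifies all components of `M`. An `A`-linear map is therefore determined
by its restriction to one component `M_x`; conversely a `B`-linear `h : M_x → M_{xg}` extends to
`M_y` as `c⁻¹ ∘ h ∘ c` for a unit `c ∈ A_{xy⁻¹}`, and `B`-linearity of `h` is exactly what makes
these pieces assemble into an `A`-linear map.

A bijective endomorphism of degree `g` commutes with the projections onto the components, so it
maps `M_1` onto `M_g`. Conversely, a `B`-isomorphism `M_1 ≅ M_g` and its inverse extend to
elements of `A'_g` and `A'_{g⁻¹}` whose products restrict to the identity on a component, hence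
are the identity.
-/

open DirectSum

section Decomposition

variable {ι M N σ τ : Type*} [DecidableEq ι] [AddCommMonoid M] [AddCommMonoid N]
  [SetLike σ M] [AddSubmonoidClass σ M] [SetLike τ N] [AddSubmonoidClass τ N]
  {ℳ : ι → σ} {𝒩 : ι → τ} [Decomposition ℳ] [Decomposition 𝒩]

theorem DirectSum.decompose_map_of_mapsTo {φ : M →+ N} {s : ι → ι} (hs : s.Injective)
    (hφ : ∀ i, ∀ m ∈ ℳ i, φ m ∈ 𝒩 (s i)) (m : M) (i : ι) :
    (decompose 𝒩 (φ m) (s i) : N) = φ (decompose ℳ m i) := by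
  induction m using Decomposition.inductionOn ℳ with
  | zero => simp
  | @homogeneous j m =>
    by_cases hji : j = i
    · subst hji
      rw [decompose_of_mem_same ℳ m.2, decompose_of_mem_same 𝒩 (hφ j m m.2)]
    · rw [decompose_of_mem_ne ℳ m.2 hji, decompose_of_mem_ne 𝒩 (hφ j m m.2) (hs.ne hji),
        map_zero]
  | add m m' hm hm' =>
    simp only [map_add, decompose_add, add_apply, AddMemClass.coe_add, hm, hm']

theorem DirectSum.surjOn_of_mapsTo {φ : M →+ N} {s : ι → ι} (hs : s.Injective)
    (hφ : ∀ i, ∀ m ∈ ℳ i, φ m ∈ 𝒩 (s i)) (hsurj : Function.Surjective φ) (i : ι) :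
    Set.SurjOn φ (ℳ i) (𝒩 (s i)) := by
  intro n hn
  obtain ⟨m, rfl⟩ := hsurj n
  exact ⟨_, (decompose ℳ m i).2, by
    rw [← decompose_map_of_mapsTo hs hφ, decompose_of_mem_same 𝒩 hn]⟩

end Decomposition

theorem Units.val_inv_mem_of_mem {Γ A σ : Type*} [Group Γ] [DecidableEq Γ] [Semiring A]
    [SetLike σ A] [AddSubmonoidClass σ A] {𝒜 : Γ → σ} [Decomposition 𝒜]
    (hone : (1 : A) ∈ 𝒜 1)
    (hmul : ∀ {x y : Γ} {a b : A}, a ∈ 𝒜 x → b ∈ 𝒜 y → a * b ∈ 𝒜 (x * y))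
    {u : Aˣ} {g : Γ} (hu : (u : A) ∈ 𝒜 g) : ((u⁻¹ : Aˣ) : A) ∈ 𝒜 g⁻¹ := by
  have hone' : (1 : A) ∈ 𝒜 (g * g⁻¹) := by rwa [mul_inv_cancel]
  have h := decompose_map_of_mapsTo (φ := AddMonoidHom.mulLeft (u : A)) (s := (g * ·))
    (mul_right_injective g) (fun _ _ ha => hmul hu ha) ((u⁻¹ : Aˣ) : A) g⁻¹
  simp only [AddMonoidHom.coe_mulLeft, Units.mul_inv, decompose_of_mem_same 𝒜 hone'] at h
  rw [← mul_one ((u⁻¹ : Aˣ) : A), (Units.inv_mul_eq_iff_eq_mul u).2 h]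
  exact (decompose 𝒜 _ _).2

theorem map_smul_of_forall_homogeneous {ι κ R A M N : Type*} [Semiring R] [Semiring A]
    [Module R A] [AddCommMonoid M] [Module R M] [Module A M] [AddCommMonoid N] [Module A N]
    {𝒜 : ι → Submodule R A} {ℳ : κ → Submodule R M} (hA : ⨆ i, 𝒜 i = ⊤) (hM : ⨆ j, ℳ j = ⊤)
    (f : M →+ N) (hf : ∀ i j, ∀ a ∈ 𝒜 i, ∀ m ∈ ℳ j, f (a • m) = a • f m) (a : A) (m : M) :
    f (a • m) = a • f m := by
  refine Submodule.iSup_induction 𝒜 (motive := fun a => f (a • m) = a • f m)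
    (hA ▸ Submodule.mem_top) (fun i a ha => ?_) (by simp)
    (fun a a' ha ha' => by rw [add_smul, map_add, ha, ha', add_smul])
  exact Submodule.iSup_induction ℳ (motive := fun m => f (a • m) = a • f m)
    (hM ▸ Submodule.mem_top) (fun j m hm => hf i j a ha m hm) (by simp)
    (fun m m' hm hm' => by rw [smul_add, map_add, hm, hm', map_add, smul_add])

section

variable {𝒪 : Type*} [CommRing 𝒪] {Γ : Type*} [Group Γ]
  {A : Type*} [Ring A] [Algebra 𝒪 A]
  {M : Type*} [AddCommGroup M] [Module 𝒪 M] [Module A M] [IsScalarTower 𝒪 A M]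

/-- `A'_g = Hom_{A-Gr}(M, M(g))`: the `A`-linear endomorphisms of `M` shifting the
grading by `g` on the right. -/
def endComp (ℳ : Γ → Submodule 𝒪 M) (g : Γ) : Set (Module.End 𝒪 M) :=
  {f | (∀ (a : A) (m : M), f (a • m) = a • f m) ∧
    ∀ x : Γ, ∀ m ∈ ℳ x, f m ∈ ℳ (x * g)}

end

section

variable {𝒪 : Type*} [CommRing 𝒪] {Γ : Type*} [Group Γ] {A : Type*} [Ring A] [Module 𝒪 A]
  {M : Type*} [AddCommGroup M] [Module 𝒪 M] [Module A M]
  {𝒜 : Γ → Submodule 𝒪 A} {ℳ : Γ → Submodule 𝒪 M}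

theorem eq_of_map_smul_of_eqOn_component {N : Type*} [AddCommGroup N] [Module 𝒪 N] [Module A N]
    (hMsup : ⨆ x, ℳ x = ⊤)
    (hMcompat : ∀ (g x : Γ) (a : A) (m : M), a ∈ 𝒜 g → m ∈ ℳ x → a • m ∈ ℳ (g * x))
    (hcross : ∀ g : Γ, ∃ u : Aˣ, (u : A) ∈ 𝒜 g) {x : Γ} {f f' : M →ₗ[𝒪] N}
    (hf : ∀ (a : A) m, f (a • m) = a • f m) (hf' : ∀ (a : A) m, f' (a • m) = a • f' m)
    (h : ∀ m ∈ ℳ x, f m = f' m) : f = f' := by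
  refine LinearMap.ext_on (s := ⋃ y, (ℳ y : Set M)) (by rw [← Submodule.iSup_eq_span, hMsup])
    fun m hm => ?_
  obtain ⟨y, hy⟩ := Set.mem_iUnion.1 hm
  obtain ⟨c, hc⟩ := hcross (x * y⁻¹)
  have hcm : (c : A) • m ∈ ℳ x := by simpa using hMcompat _ _ _ _ hc hy
  have hm : m = ((c⁻¹ : Aˣ) : A) • (c : A) • m := by rw [smul_smul, Units.inv_mul, one_smul]
  rw [hm, hf, hf', h _ hcm]

theorem exists_mem_endComp_of_components [DecidableEq Γ] [Decomposition ℳ]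
    (hsup : ⨆ x, 𝒜 x = ⊤)
    (hMcompat : ∀ (g x : Γ) (a : A) (m : M), a ∈ 𝒜 g → m ∈ ℳ x → a • m ∈ ℳ (g * x))
    {g : Γ} (F : ∀ y, ℳ y →ₗ[𝒪] M) (hF : ∀ y m, F y m ∈ ℳ (y * g))
    (hFsmul : ∀ z y (a : A) (m : ℳ y) (m' : ℳ (z * y)), a ∈ 𝒜 z → (m' : M) = a • (m : M) →
      F (z * y) m' = a • F y m) :
    ∃ f ∈ endComp (A := A) ℳ g, ∀ y (m : ℳ y), f m = F y m := by
  let f : Module.End 𝒪 M := toModule 𝒪 Γ M F ∘ₗ (decomposeLinearEquiv ℳ).toLinearMap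
  have hfF : ∀ y (m : ℳ y), f m = F y m := fun y m => by
    simp [f, decomposeLinearEquiv_apply, ← lof_eq_of 𝒪, toModule_lof]
  refine ⟨f, ⟨map_smul_of_forall_homogeneous hsup
    (Decomposition.isInternal ℳ).submodule_iSup_eq_top f.toAddMonoidHom ?_, ?_⟩, hfF⟩
  · intro z y a ha m hm
    change f (a • m) = a • f m
    rw [hfF _ ⟨_, hMcompat z y a m ha hm⟩, hfF y ⟨m, hm⟩]
    exact hFsmul z y a ⟨m, hm⟩ _ ha rfl
  · intro y m hm
    exact hfF y ⟨m, hm⟩ ▸ hF y ⟨m, hm⟩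

theorem exists_mem_endComp_restrict_eq [SMulCommClass A 𝒪 M] [DecidableEq Γ]
    [Decomposition ℳ] (hsup : ⨆ x, 𝒜 x = ⊤)
    (hgmul : ∀ {x y : Γ} {a b : A}, a ∈ 𝒜 x → b ∈ 𝒜 y → a * b ∈ 𝒜 (x * y))
    (hMcompat : ∀ (g x : Γ) (a : A) (m : M), a ∈ 𝒜 g → m ∈ ℳ x → a • m ∈ ℳ (g * x))
    (hunit : ∀ g : Γ, ∃ u : Aˣ, (u : A) ∈ 𝒜 g ∧ ((u⁻¹ : Aˣ) : A) ∈ 𝒜 g⁻¹) {g x : Γ}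
    (h : ℳ x →ₗ[𝒪] M) (hh : ∀ m, h m ∈ ℳ (x * g))
    (hB : ∀ b ∈ 𝒜 1, ∀ m m' : ℳ x, (m' : M) = b • (m : M) → h m' = b • h m) :
    ∃ f ∈ endComp (A := A) ℳ g, ∀ m : ℳ x, f m = h m := by
  choose c hc hcinv using fun y => hunit (x * y⁻¹)
  have hcm : ∀ y, ∀ m ∈ ℳ y, (c y : A) • m ∈ ℳ x := fun y m hm => by
    simpa using hMcompat _ _ _ _ (hc y) hm
  let F : ∀ y, ℳ y →ₗ[𝒪] M := fun y => DistribSMul.toLinearMap 𝒪 M ((c y)⁻¹ : Aˣ).val ∘ₗ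
    h ∘ₗ (DistribSMul.toLinearMap 𝒪 M (c y : A)).restrict (hcm y)
  have hF : ∀ y (m : ℳ y), F y m = ((c y)⁻¹ : Aˣ).val • h ⟨(c y : A) • m, hcm y m m.2⟩ :=
    fun _ _ => rfl
  have hFmem : ∀ y m, F y m ∈ ℳ (y * g) := fun y m => by
    have := hMcompat _ _ _ _ (hcinv y) (hh ⟨_, hcm y m m.2⟩)
    rwa [show (x * y⁻¹)⁻¹ * (x * g) = y * g by group] at this
  have hFsmul : ∀ z y (a : A) (m : ℳ y) (m' : ℳ (z * y)), a ∈ 𝒜 z → (m' : M) = a • (m : M) →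
      F (z * y) m' = a • F y m := by
    intro z y a m m' ha hm'
    set b := (c (z * y) : A) * a * ((c y)⁻¹ : Aˣ)
    have hb : b ∈ 𝒜 1 := by
      have := hgmul (hgmul (hc (z * y)) ha) (hcinv y)
      rwa [show x * (z * y)⁻¹ * z * (x * y⁻¹)⁻¹ = 1 by group] at this
    have hbh : h ⟨_, hcm _ m' m'.2⟩ = b • h ⟨_, hcm y m m.2⟩ :=
      hB b hb _ _ (by simp [b, hm', smul_smul, mul_assoc])
    rw [hF, hF, hbh, smul_smul, smul_smul]
    simp [b, mul_assoc]
  obtain ⟨f, hf, hfF⟩ := exists_mem_endComp_of_components hsup hMcompat F hFmem hFsmul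
  refine ⟨f, hf, fun m => ?_⟩
  have hcx : (c x : A) ∈ 𝒜 1 := by simpa using hc x
  rw [hfF, hF, hB _ hcx m _ rfl, smul_smul, Units.inv_mul, one_smul]

theorem exists_bijective_mem_endComp_of_linearEquiv [SMulCommClass A 𝒪 M] [DecidableEq Γ]
    [Decomposition ℳ] (hsup : ⨆ x, 𝒜 x = ⊤)
    (hgmul : ∀ {x y : Γ} {a b : A}, a ∈ 𝒜 x → b ∈ 𝒜 y → a * b ∈ 𝒜 (x * y))
    (hMcompat : ∀ (g x : Γ) (a : A) (m : M), a ∈ 𝒜 g → m ∈ ℳ x → a • m ∈ ℳ (g * x))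
    (hunit : ∀ g : Γ, ∃ u : Aˣ, (u : A) ∈ 𝒜 g ∧ ((u⁻¹ : Aˣ) : A) ∈ 𝒜 g⁻¹) {g : Γ}
    (e : ℳ 1 ≃ₗ[𝒪] ℳ g)
    (he : ∀ b ∈ 𝒜 1, ∀ m m' : ℳ 1, (m' : M) = b • (m : M) → (e m' : M) = b • (e m : M)) :
    ∃ f ∈ endComp (A := A) ℳ g, Function.Bijective f := by
  have he_symm : ∀ b ∈ 𝒜 1, ∀ n n' : ℳ g, (n' : M) = b • (n : M) →
      (e.symm n' : M) = b • (e.symm n : M) := by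
    intro b hb n n' hn
    have hbn : b • (e.symm n : M) ∈ ℳ 1 := by simpa using hMcompat 1 1 b _ hb (e.symm n).2
    have : e ⟨_, hbn⟩ = n' := Subtype.ext (by rw [he b hb _ _ rfl, e.apply_symm_apply, hn])
    rw [← this, e.symm_apply_apply]
  obtain ⟨f, hf, hfe⟩ := exists_mem_endComp_restrict_eq (g := g) (x := 1) hsup hgmul hMcompat hunit
    ((ℳ g).subtype ∘ₗ e.toLinearMap) (fun _ => by simp) he
  obtain ⟨f', hf', hf'e⟩ := exists_mem_endComp_restrict_eq (g := g⁻¹) hsup hgmul hMcompat hunit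
    ((ℳ 1).subtype ∘ₗ e.symm.toLinearMap) (fun _ => by simp) he_symm
  have hMsup := (Decomposition.isInternal ℳ).submodule_iSup_eq_top
  have hcross : ∀ g : Γ, ∃ u : Aˣ, (u : A) ∈ 𝒜 g := fun g => (hunit g).imp fun _ => And.left
  have hleft : f' * f = 1 := by
    refine eq_of_map_smul_of_eqOn_component hMsup hMcompat hcross (x := 1)
      (fun a m => by simp [hf.1, hf'.1]) (fun _ _ => rfl) fun m hm => ?_
    simp [hfe ⟨m, hm⟩, hf'e (e ⟨m, hm⟩)]
  have hright : f * f' = 1 := by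
    refine eq_of_map_smul_of_eqOn_component hMsup hMcompat hcross (x := g)
      (fun a m => by simp [hf.1, hf'.1]) (fun _ _ => rfl) fun n hn => ?_
    simp [hf'e ⟨n, hn⟩, hfe (e.symm ⟨n, hn⟩)]
  exact ⟨f, hf, Function.bijective_iff_has_inverse.2
    ⟨f', LinearMap.congr_fun hleft, LinearMap.congr_fun hright⟩⟩

end

section

variable {𝒪 : Type*} [CommRing 𝒪] {Γ : Type*} [Group Γ]
  {A : Type*} [Ring A] [Algebra 𝒪 A]
  {M : Type*} [AddCommGroup M] [Module 𝒪 M] [Module A M] [IsScalarTower 𝒪 A M]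

theorem endComp_iso_hom_and_crossed_product_iff_invariant_general
    (𝒜 : Γ → Submodule 𝒪 A) (ℳ : Γ → Submodule 𝒪 M)
    -- `A` is a `Γ`-graded algebra:
    (hone : (1 : A) ∈ 𝒜 1)
    (hgmul : ∀ {x y : Γ} {a b : A}, a ∈ 𝒜 x → b ∈ 𝒜 y → a * b ∈ 𝒜 (x * y))
    (hsup : (⨆ x, 𝒜 x) = ⊤) (hind : iSupIndep 𝒜)
    -- which is a crossed product: every component contains a unit:
    (hcross : ∀ g : Γ, ∃ u : Aˣ, (u : A) ∈ 𝒜 g)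
    -- `M` is a `Γ`-graded `A`-module:
    (hMsup : (⨆ x, ℳ x) = ⊤) (hMind : iSupIndep ℳ)
    (hMcompat : ∀ (g x : Γ) (a : A) (m : M), a ∈ 𝒜 g → m ∈ ℳ x → a • m ∈ ℳ (g * x)) :
    -- (1) for all `g, x`, restriction to `M_x` is a bijection
    --     `A'_g = Hom_{A-Gr}(M, M(g)) ≅ Hom_{A₁}(M_x, M_{xg})`
    --     (the case `x = 1` being `A'_g ≅ Hom_{A₁}(M₁, M_g)`):
    (∀ g x : Γ,
      (∀ f ∈ endComp (A := A) ℳ g, ∀ f' ∈ endComp (A := A) ℳ g,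
        (∀ m ∈ ℳ x, f m = f' m) → f = f') ∧
      (∀ h : ↥(ℳ x) →ₗ[𝒪] M,
        (∀ m : ↥(ℳ x), h m ∈ ℳ (x * g)) →
        (∀ b ∈ 𝒜 1, ∀ m m' : ↥(ℳ x), (m' : M) = b • (m : M) → h m' = b • h m) →
        ∃ f ∈ endComp (A := A) ℳ g, ∀ m : ↥(ℳ x), f (m : M) = h m)) ∧
    -- (2) `A'` is a crossed product of `A'₁` with `Γ` (every component `A'_g` contains
    --     an invertible element) iff `V = M₁` is a `Γ`-invariant `B`-module
    --     (there are `B`-linear bijections `M₁ ≅ M_g`, i.e. `V ≅ {}^gV` for all `g`):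
    ((∀ g : Γ, ∃ f ∈ endComp (A := A) ℳ g, Function.Bijective f) ↔
      (∀ g : Γ, ∃ τ : ↥(ℳ 1) →ₗ[𝒪] M,
        (∀ m : ↥(ℳ 1), τ m ∈ ℳ g) ∧
        (∀ b ∈ 𝒜 1, ∀ m m' : ↥(ℳ 1), (m' : M) = b • (m : M) → τ m' = b • τ m) ∧
        (∀ m m' : ↥(ℳ 1), τ m = τ m' → m = m') ∧
        (∀ y ∈ ℳ g, ∃ m : ↥(ℳ 1), τ m = y))) := by
  classical
  have := (isInternal_submodule_of_iSupIndep_of_iSup_eq_top hind hsup).chooseDecomposition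
  have := (isInternal_submodule_of_iSupIndep_of_iSup_eq_top hMind hMsup).chooseDecomposition
  have hunit : ∀ g : Γ, ∃ u : Aˣ, (u : A) ∈ 𝒜 g ∧ ((u⁻¹ : Aˣ) : A) ∈ 𝒜 g⁻¹ := fun g =>
    (hcross g).imp fun _ hu => ⟨hu, Units.val_inv_mem_of_mem hone hgmul hu⟩
  refine ⟨fun g x => ⟨fun _ hf _ hf' =>
      eq_of_map_smul_of_eqOn_component hMsup hMcompat hcross hf.1 hf'.1,
    fun h => exists_mem_endComp_restrict_eq hsup hgmul hMcompat hunit h⟩,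
    fun hA' g => ?_, fun hV g => ?_⟩
  · obtain ⟨f, hf, hbij⟩ := hA' g
    refine ⟨f.domRestrict (ℳ 1), fun m => by simpa using hf.2 1 m m.2,
      fun b _ m m' hm => by simp [hm, hf.1], fun m m' hmm' => Subtype.ext (hbij.1 hmm'),
      fun n hn => ?_⟩
    obtain ⟨m, hm, rfl⟩ := surjOn_of_mapsTo (φ := f.toAddMonoidHom) (mul_left_injective g)
      hf.2 hbij.2 1 (by simpa using hn)
    exact ⟨⟨m, hm⟩, rfl⟩
  · obtain ⟨τ, hτ, hτB, hτinj, hτsurj⟩ := hV g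
    let e := LinearEquiv.ofBijective (τ.codRestrict (ℳ g) hτ)
      ⟨fun m m' h => hτinj m m' (congrArg Subtype.val h),
        fun n => (hτsurj n n.2).imp fun _ hm => Subtype.ext hm⟩
    exact exists_bijective_mem_endComp_of_linearEquiv hsup hgmul hMcompat hunit e hτB

theorem endComp_iso_hom_and_crossed_product_iff_invariant
    (𝒜 : Γ → Submodule 𝒪 A) (ℳ : Γ → Submodule 𝒪 M)
    -- `A` is a `Γ`-graded algebra:
    (hone : (1 : A) ∈ 𝒜 1)
    (hgmul : ∀ {x y : Γ} {a b : A}, a ∈ 𝒜 x → b ∈ 𝒜 y → a * b ∈ 𝒜 (x * y))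
    (hsup : (⨆ x, 𝒜 x) = ⊤) (hind : iSupIndep 𝒜)
    -- which is a crossed product: every component contains a unit:
    (hcross : ∀ g : Γ, ∃ u : Aˣ, (u : A) ∈ 𝒜 g)
    -- `M` is a `Γ`-graded `A`-module:
    (hMsup : (⨆ x, ℳ x) = ⊤) (hMind : iSupIndep ℳ)
    (hMcompat : ∀ (g x : Γ) (a : A) (m : M), a ∈ 𝒜 g → m ∈ ℳ x → a • m ∈ ℳ (g * x))
    -- which is induced from its identity component `V = M₁`, i.e. `M = A ⊗_B V`:
    (hInd : ∀ g : Γ, ℳ g = Submodule.span 𝒪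
      {m' : M | ∃ a ∈ 𝒜 g, ∃ m ∈ ℳ 1, m' = a • m}) :
    -- (1) for all `g, x`, restriction to `M_x` is a bijection
    --     `A'_g = Hom_{A-Gr}(M, M(g)) ≅ Hom_{A₁}(M_x, M_{xg})`
    --     (the case `x = 1` being `A'_g ≅ Hom_{A₁}(M₁, M_g)`):
    (∀ g x : Γ,
      (∀ f ∈ endComp (A := A) ℳ g, ∀ f' ∈ endComp (A := A) ℳ g,
        (∀ m ∈ ℳ x, f m = f' m) → f = f') ∧
      (∀ h : ↥(ℳ x) →ₗ[𝒪] M,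
        (∀ m : ↥(ℳ x), h m ∈ ℳ (x * g)) →
        (∀ b ∈ 𝒜 1, ∀ m m' : ↥(ℳ x), (m' : M) = b • (m : M) → h m' = b • h m) →
        ∃ f ∈ endComp (A := A) ℳ g, ∀ m : ↥(ℳ x), f (m : M) = h m)) ∧
    -- (2) `A'` is a crossed product of `A'₁` with `Γ` (every component `A'_g` contains
    --     an invertible element) iff `V = M₁` is a `Γ`-invariant `B`-module
    --     (there are `B`-linear bijections `M₁ ≅ M_g`, i.e. `V ≅ {}^gV` for all `g`):
    ((∀ g : Γ, ∃ f ∈ endComp (A := A) ℳ g, Function.Bijective f) ↔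
      (∀ g : Γ, ∃ τ : ↥(ℳ 1) →ₗ[𝒪] M,
        (∀ m : ↥(ℳ 1), τ m ∈ ℳ g) ∧
        (∀ b ∈ 𝒜 1, ∀ m m' : ↥(ℳ 1), (m' : M) = b • (m : M) → τ m' = b • τ m) ∧
        (∀ m m' : ↥(ℳ 1), τ m = τ m' → m = m') ∧
        (∀ y ∈ ℳ g, ∃ m : ↥(ℳ 1), τ m = y))) :=
  endComp_iso_hom_and_crossed_product_iff_invariant_general 𝒜 ℳ hone hgmul hsup hind hcross hMsup
    hMind hMcompat

end
end
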